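/- Let F(x) = lim_s F_s(x), F_s(x) ∈ {0,1}, be a computable approximation with 1 ≤ |{s : F_s(x) ≠ F_{s+1}(x)}| ≤ n+1 for all x. For i ≥ 1 define F̃^i = {⟨y,t⟩ : F_t(y) = F(y), F_{t+1}(y) ≠ F_t(y), c_t(y) = i}, where c_t(y) = |{s ≤ t : F_s(y) ≠ F_{s+1}(y)}|. Then F̃^{n+1} = ∅ and for each i ≥ 1 the set F̃^i is c.e. relative to F̃^{i+1}. -/

import Mathlib

open Classical in
/-- Characteristic function of a set of naturals. -/
noncomputable def chi (A : Set ℕ) : ℕ → ℕ := fun n => if n ∈ A then 1 else 0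

/-- Partial functions computable relative to an oracle `O : ℕ → ℕ`. -/
inductive RecursiveInOracle (O : ℕ → ℕ) : (ℕ →. ℕ) → Prop
  | zero : RecursiveInOracle O (pure 0)
  | succ : RecursiveInOracle O Nat.succ
  | left : RecursiveInOracle O ↑fun n : ℕ => n.unpair.1
  | right : RecursiveInOracle O ↑fun n : ℕ => n.unpair.2
  | oracle : RecursiveInOracle O ↑O
  | pair {f g} : RecursiveInOracle O f → RecursiveInOracle O g →
      RecursiveInOracle O fun n => Nat.pair <$> f n <*> g n
  | comp {f g} : RecursiveInOracle O f → RecursiveInOracle O g →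
      RecursiveInOracle O fun n => g n >>= f
  | prec {f g} : RecursiveInOracle O f → RecursiveInOracle O g →
      RecursiveInOracle O (Nat.unpaired fun a n =>
        n.rec (f a) fun y IH => do let i ← IH; g (Nat.pair a (Nat.pair y i)))
  | rfind {f} : RecursiveInOracle O f →
      RecursiveInOracle O fun a => Nat.rfind fun n => (fun m => m = 0) <$> f (Nat.pair a n)

/-- Turing reducibility between sets of naturals: `A ≤_T B`. -/
def SetTuringRed (A B : Set ℕ) : Prop := RecursiveInOracle (chi B) ↑(chi A)

/-- `A` is computably enumerable. -/
def CE (A : Set ℕ) : Prop := ∃ f : ℕ →. ℕ, Nat.Partrec f ∧ ∀ n, n ∈ A ↔ (f n).Dom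

/-- `A` is c.e. relative to the oracle `O`. -/
def CEIn (O : ℕ → ℕ) (A : Set ℕ) : Prop :=
  ∃ f : ℕ →. ℕ, RecursiveInOracle O f ∧ ∀ n, n ∈ A ↔ (f n).Dom

/-- A uniformly c.e. sequence of sets. -/
def UnifCE (A : ℕ → Set ℕ) : Prop :=
  ∃ f : ℕ →. ℕ, Nat.Partrec f ∧ ∀ i x, x ∈ A i ↔ (f (Nat.pair i x)).Dom

/-!
A pair `⟨y, t⟩` lies in `F̃^i` when `t` is the `i`-th change of the approximation at `y` and the
value at stage `t` is already the limit. Since the approximation is `{0, 1}`-valued, the value at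
the `i`-th change is the limit exactly when the `(i+1)`-st change exists and its value is not the
limit, i.e. `⟨y, s⟩ ∉ F̃^{i+1}`. This describes `F̃^i` by an unbounded search over `s` with a
computable matrix and a negative query to `F̃^{i+1}`. For `i = n + 1` the `(n+2)`-nd change would
be needed, so `F̃^{n+1}` is empty.
-/

open Filter Finset

section ChangeCount

variable {α : Type*} [DecidableEq α] (f : ℕ → α)

def changeCount (t : ℕ) : ℕ := #{s ∈ range (t + 1) | f s ≠ f (s + 1)}

def IsNthChange (t i : ℕ) : Prop := f t ≠ f (t + 1) ∧ changeCount f t = i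

instance (t i : ℕ) : Decidable (IsNthChange f t i) :=
  inferInstanceAs (Decidable (_ ∧ _))

theorem changeCount_zero : changeCount f 0 = if f 0 = f 1 then 0 else 1 := by
  by_cases h : f 0 = f 1 <;> simp [changeCount, filter_singleton, h]

theorem changeCount_succ (t : ℕ) :
    changeCount f (t + 1) = changeCount f t + if f (t + 1) = f (t + 2) then 0 else 1 := by
  by_cases h : f (t + 1) = f (t + 2) <;>
    simp [changeCount, range_add_one (n := t + 1), filter_insert, h]

theorem changeCount_mono : Monotone (changeCount f) :=
  monotone_nat_of_le_succ fun t => by rw [changeCount_succ]; omega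

theorem changeCount_eq_ncard (t : ℕ) :
    changeCount f t = {s | s ≤ t ∧ f s ≠ f (s + 1)}.ncard := by
  rw [changeCount, ← Set.ncard_coe_finset]
  congr 1
  ext s
  simp

theorem changeCount_le_ncard (hfin : {s | f s ≠ f (s + 1)}.Finite) (t : ℕ) :
    changeCount f t ≤ {s | f s ≠ f (s + 1)}.ncard := by
  rw [changeCount_eq_ncard]
  exact Set.ncard_le_ncard (fun s hs => hs.2) hfin

theorem apply_succ_eq_of_changeCount_eq {t s : ℕ} (hts : t ≤ s)
    (h : changeCount f s = changeCount f t) : f (t + 1) = f (s + 1) := by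
  induction s, hts using Nat.le_induction with
  | base => rfl
  | succ s hts ih =>
    have hstep := changeCount_mono f (Nat.le_succ s)
    have hts' := changeCount_mono f hts
    rw [changeCount_succ] at h hstep
    rw [ih (by omega)]
    split_ifs at h with hconst
    · exact hconst
    · omega

variable {f}

theorem IsNthChange.apply_succ_eq {t s i : ℕ} (ht : IsNthChange f t i)
    (hs : IsNthChange f s (i + 1)) : f (t + 1) = f s := by
  have hts : t < s := (changeCount_mono f).reflect_lt (by rw [ht.2, hs.2]; omega)
  obtain ⟨u, rfl⟩ := Nat.exists_eq_add_one_of_ne_zero (Nat.ne_zero_of_lt hts)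
  have hcount := changeCount_succ f u
  rw [if_neg hs.1, hs.2] at hcount
  exact apply_succ_eq_of_changeCount_eq f (Nat.lt_succ_iff.1 hts) (by rw [ht.2]; omega)

theorem exists_isNthChange_succ {L : α} (hL : ∀ᶠ s in atTop, f s = L) {t : ℕ}
    (hne : f (t + 1) ≠ L) : ∃ s, IsNthChange f s (changeCount f t + 1) := by
  have hgrow : ∃ s, changeCount f t < changeCount f s := by
    by_contra! hstuck
    obtain ⟨s, hsL, hts⟩ := (hL.and (eventually_gt_atTop t)).exists
    obtain ⟨u, rfl⟩ := Nat.exists_eq_add_one_of_ne_zero (Nat.ne_zero_of_lt hts)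
    have htu : t ≤ u := Nat.lt_succ_iff.1 hts
    exact hne (hsL ▸ apply_succ_eq_of_changeCount_eq f htu
      (le_antisymm (hstuck u) (changeCount_mono f htu)))
  obtain ⟨s, hs, hmin⟩ : ∃ s, changeCount f t < changeCount f s ∧
      ∀ u < s, changeCount f u ≤ changeCount f t :=
    ⟨Nat.find hgrow, Nat.find_spec hgrow, fun u hu => not_lt.1 (Nat.find_min hgrow hu)⟩
  obtain ⟨u, rfl⟩ :=
    Nat.exists_eq_add_one_of_ne_zero (Nat.ne_zero_of_lt ((changeCount_mono f).reflect_lt hs))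
  have hcount := changeCount_succ f u
  have hu := hmin u u.lt_succ_self
  refine ⟨u + 1, ?_, ?_⟩ <;> split_ifs at hcount <;> omega

theorem IsNthChange.lt_ncard_of_apply_eq {L : α} (hL : ∀ᶠ s in atTop, f s = L)
    (hfin : {s | f s ≠ f (s + 1)}.Finite) {t i : ℕ} (ht : IsNthChange f t i) (htL : f t = L) :
    i < {s | f s ≠ f (s + 1)}.ncard := by
  obtain ⟨s, hs⟩ := exists_isNthChange_succ hL (htL ▸ ht.1.symm)
  have hle := changeCount_le_ncard f hfin s
  rw [hs.2, ht.2] at hle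
  omega

end ChangeCount

theorem IsNthChange.apply_eq_limit_iff {f : ℕ → ℕ} (hf : ∀ s, f s ≤ 1) {L : ℕ}
    (hL : ∀ᶠ s in atTop, f s = L) {t i : ℕ} (ht : IsNthChange f t i) :
    f t = L ↔ ∃ s, IsNthChange f s (i + 1) ∧ f s ≠ L := by
  constructor
  · intro htL
    obtain ⟨s, hs⟩ := exists_isNthChange_succ hL (htL ▸ ht.1.symm)
    rw [ht.2] at hs
    exact ⟨s, hs, ht.apply_succ_eq hs ▸ htL ▸ ht.1.symm⟩
  · rintro ⟨s, hs, hsL⟩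
    have hnext : f (t + 1) ≠ L := ht.apply_succ_eq hs ▸ hsL
    obtain ⟨N, hN⟩ := hL.exists
    -- `f t` and `L` both differ from `f (t + 1)` inside `{0, 1}`
    have := ht.1
    have := hf t; have := hf (t + 1); have := hf N
    omega

theorem eq_limit_and_isNthChange_iff {f : ℕ → ℕ} (hf : ∀ s, f s ≤ 1) {L : ℕ}
    (hL : ∀ᶠ s in atTop, f s = L) {t i : ℕ} :
    f t = L ∧ IsNthChange f t i ↔ ∃ s, (IsNthChange f t i ∧ IsNthChange f s (i + 1)) ∧
      ¬(f s = L ∧ IsNthChange f s (i + 1)) := by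
  constructor
  · rintro ⟨htL, ht⟩
    obtain ⟨s, hs, hsL⟩ := (ht.apply_eq_limit_iff hf hL).1 htL
    exact ⟨s, ⟨ht, hs⟩, fun h => hsL h.1⟩
  · rintro ⟨s, ⟨ht, hs⟩, hs_not⟩
    exact ⟨(ht.apply_eq_limit_iff hf hL).2 ⟨s, hs, fun hsL => hs_not ⟨hsL, hs⟩⟩, ht⟩

section Computability

variable {Fa : ℕ → ℕ → ℕ}

theorem computable₂_decide_apply_eq_apply_succ (hFa : Computable₂ Fa) :
    Computable₂ fun y s => decide (Fa s y = Fa (s + 1) y) :=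
  Primrec.eq.decide.to_comp.comp₂ (hFa.comp₂ Primrec₂.right.to_comp Primrec₂.left.to_comp)
    (hFa.comp₂ (Computable.succ.comp₂ Primrec₂.right.to_comp) Primrec₂.left.to_comp)

theorem computable₂_changeCount (hFa : Computable₂ Fa) :
    Computable₂ fun y t => changeCount (Fa · y) t := by
  have hjump : Computable₂ fun y s => if Fa s y = Fa (s + 1) y then 0 else 1 :=
    ((computable₂_decide_apply_eq_apply_succ hFa).cond (.const 0) (.const 1)).of_eq
      fun _ => by simp
  have hstep : Computable₂ fun (p : ℕ × ℕ) (q : ℕ × ℕ) =>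
      q.2 + if Fa (q.1 + 1) p.1 = Fa (q.1 + 1 + 1) p.1 then 0 else 1 :=
    Primrec.nat_add.to_comp.comp₂ (Computable.snd.comp₂ Primrec₂.right.to_comp)
      (hjump.comp₂ (Computable.fst.comp₂ Primrec₂.left.to_comp)
        (Computable.succ.comp₂ (Computable.fst.comp₂ Primrec₂.right.to_comp)))
  refine (Computable.nat_rec (f := fun p : ℕ × ℕ => p.2) .snd (hjump.comp .fst (.const 0))
    hstep).of_eq ?_
  rintro ⟨y, t⟩
  induction t with
  | zero => simp [changeCount_zero]
  | succ t ih => simp [changeCount_succ, ← ih]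

theorem computable₂_isNthChange (hFa : Computable₂ Fa) (i : ℕ) :
    Computable₂ fun y t => decide (IsNthChange (Fa · y) t i) := by
  have hcount : Computable₂ fun y t => decide (changeCount (Fa · y) t = i) :=
    Primrec.eq.decide.to_comp.comp₂ (computable₂_changeCount hFa) (Computable.const i).to₂
  have hchange : Computable₂ fun y t => !decide (Fa t y = Fa (t + 1) y) :=
    Primrec.not.to_comp.comp (computable₂_decide_apply_eq_apply_succ hFa)
  refine (Primrec.and.to_comp.comp₂ hchange hcount).of_eq fun _ => ?_
  dsimp only
  rw [← decide_not, ← Bool.decide_and]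
  exact decide_eq_decide.2 Iff.rfl

end Computability

namespace RecursiveInOracle

variable {O : ℕ → ℕ}

theorem of_partrec {f : ℕ →. ℕ} (h : Nat.Partrec f) : RecursiveInOracle O f := by
  induction h with
  | zero => exact .zero
  | succ => exact .succ
  | left => exact .left
  | right => exact .right
  | pair _ _ ih1 ih2 => exact .pair ih1 ih2
  | comp _ _ ih1 ih2 => exact .comp ih1 ih2
  | prec _ _ ih1 ih2 => exact .prec ih1 ih2
  | rfind _ ih => exact .rfind ih

theorem of_computable {f : ℕ → ℕ} (h : Computable f) : RecursiveInOracle O f :=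
  of_partrec (Partrec.nat_iff.1 h)

theorem comp_total {f g : ℕ → ℕ} (hf : RecursiveInOracle O f) (hg : RecursiveInOracle O g) :
    RecursiveInOracle O ↑fun n => f (g n) := by
  have e : PFun.lift (fun n => f (g n)) = fun n => PFun.lift g n >>= PFun.lift f := by
    funext n
    exact (Part.eq_some_iff.2 (Part.mem_bind (Part.mem_some _) (Part.mem_some _))).symm
  exact e ▸ hf.comp hg

theorem add_total {f g : ℕ → ℕ} (hf : RecursiveInOracle O f) (hg : RecursiveInOracle O g) :
    RecursiveInOracle O ↑fun n => f n + g n := by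
  have hadd : RecursiveInOracle O ↑(Nat.unpaired (· + ·)) :=
    of_partrec (Nat.Partrec.of_primrec Nat.Primrec.add)
  have e : PFun.lift (fun n => f n + g n) = fun n =>
      Nat.pair <$> PFun.lift f n <*> PFun.lift g n >>= PFun.lift (Nat.unpaired (· + ·)) := by
    funext n
    refine (Part.eq_some_iff.2 (Part.mem_bind (a := Nat.pair (f n) (g n)) ?_ ?_)).symm
    · simp [PFun.coe_val, Seq.seq]
    · simp [PFun.coe_val]
  exact e ▸ hadd.comp (hf.pair hg)

end RecursiveInOracle

theorem CEIn.setOf_exists_eq_zero {O h : ℕ → ℕ} (hh : RecursiveInOracle O h) :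
    CEIn O {m | ∃ k, h (Nat.pair m k) = 0} :=
  ⟨_, hh.rfind, fun _ => Iff.trans (by simp [PFun.coe_val]) Nat.rfind_dom.symm⟩

theorem chi_eq_zero_iff {B : Set ℕ} {x : ℕ} : chi B x = 0 ↔ x ∉ B := by
  simp [chi]

theorem CEIn.chi_setOf_exists_and_notMem {B : Set ℕ} {p : ℕ → ℕ → Bool} (hp : Computable₂ p)
    {g : ℕ → ℕ → ℕ} (hg : Computable₂ g) : CEIn (chi B) {m | ∃ k, p m k ∧ g m k ∉ B} := by
  have hfst : Computable fun n : ℕ => n.unpair.1 := Computable.fst.comp Computable.unpair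
  have hsnd : Computable fun n : ℕ => n.unpair.2 := Computable.snd.comp Computable.unpair
  have htest : RecursiveInOracle (chi B) ↑fun n : ℕ =>
      (bif p n.unpair.1 n.unpair.2 then 0 else 1) + chi B (g n.unpair.1 n.unpair.2) :=
    .add_total (.of_computable ((hp.comp hfst hsnd).cond (.const 0) (.const 1)))
      (.comp_total .oracle (.of_computable (hg.comp hfst hsnd)))
  convert CEIn.setOf_exists_eq_zero htest using 4 with m
  ext k
  cases hpk : p m k <;> simp [hpk, chi_eq_zero_iff]

theorem stmt10 (n : ℕ) (F : ℕ → ℕ) (Fa : ℕ → ℕ → ℕ)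
    (hcomp : Computable fun p : ℕ × ℕ => Fa p.1 p.2)
    (hval : ∀ s x, Fa s x ≤ 1)
    (hlim : ∀ x, ∃ N, ∀ s ≥ N, Fa s x = F x)
    (hchg : ∀ x, {s | Fa s x ≠ Fa (s + 1) x}.Finite ∧
      1 ≤ {s | Fa s x ≠ Fa (s + 1) x}.ncard ∧
      {s | Fa s x ≠ Fa (s + 1) x}.ncard ≤ n + 1)
    (c : ℕ → ℕ → ℕ)
    (hc : ∀ t y, c t y = {s | s ≤ t ∧ Fa s y ≠ Fa (s + 1) y}.ncard)
    (Ft : ℕ → Set ℕ)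
    (hFt : ∀ i, Ft i = {m : ℕ | ∃ y t, m = Nat.pair y t ∧
      Fa t y = F y ∧ Fa (t + 1) y ≠ Fa t y ∧ c t y = i}) :
    Ft (n + 1) = ∅ ∧ ∀ i, 1 ≤ i → CEIn (chi (Ft (i + 1))) (Ft i) := by
  have hFa : Computable₂ Fa := hcomp
  have hconv : ∀ y, ∀ᶠ s in atTop, Fa s y = F y := fun y => eventually_atTop.2 (hlim y)
  have hmem : ∀ i y t, Nat.pair y t ∈ Ft i ↔ Fa t y = F y ∧ IsNthChange (Fa · y) t i := by
    intro i y t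
    simp [hFt, IsNthChange, hc, ← changeCount_eq_ncard, ne_comm]
  refine ⟨Set.eq_empty_of_forall_notMem fun m hm => ?_, fun i _ => ?_⟩
  · obtain ⟨y, t, rfl⟩ : ∃ y t, m = Nat.pair y t := ⟨_, _, (Nat.pair_unpair m).symm⟩
    obtain ⟨hlimt, ht⟩ := (hmem _ y t).1 hm
    have hlt := ht.lt_ncard_of_apply_eq (hconv y) (hchg y).1 hlimt
    have hle := (hchg y).2.2
    omega
  · have hchar : Ft i = {m | ∃ s, (decide (IsNthChange (Fa · m.unpair.1) m.unpair.2 i) &&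
        decide (IsNthChange (Fa · m.unpair.1) s (i + 1))) ∧
        Nat.pair m.unpair.1 s ∉ Ft (i + 1)} := by
      ext m
      obtain ⟨y, t, rfl⟩ : ∃ y t, m = Nat.pair y t := ⟨_, _, (Nat.pair_unpair m).symm⟩
      simpa [hmem] using eq_limit_and_isNthChange_iff (hval · y) (hconv y)
    have hy : Computable₂ fun (m _ : ℕ) => m.unpair.1 :=
      (Computable.fst.comp Computable.unpair).comp₂ Primrec₂.left.to_comp
    have ht : Computable₂ fun (m _ : ℕ) => m.unpair.2 :=
      (Computable.snd.comp Computable.unpair).comp₂ Primrec₂.left.to_comp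
    rw [hchar]
    exact CEIn.chi_setOf_exists_and_notMem
      (Primrec.and.to_comp.comp₂ ((computable₂_isNthChange hFa i).comp₂ hy ht)
        ((computable₂_isNthChange hFa (i + 1)).comp₂ hy Primrec₂.right.to_comp))
      (Primrec₂.natPair.to_comp.comp₂ hy Primrec₂.right.to_comp)
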